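/- The composition of two pseudo-Lipschitz functions is pseudo-Lipschitz: if f : ℝ^m → ℝ satisfies |f(x) - f(y)| ≤ C(1 + ‖x‖^p + ‖y‖^p)‖x - y‖ and each coordinate of g : ℝ^k → ℝ^m satisfies an analogous bound, then f ∘ g is pseudo-Lipschitz (for some constant and degree). -/
import Mathlib


/-- The composition of pseudo-Lipschitz functions is pseudo-Lipschitz (for some constant
and some degree). Norms are Euclidean. -/
theorem stmt_4 (m k : ℕ) (p q : ℝ) (hp : 0 ≤ p) (hq : 0 ≤ q)
    (f : EuclideanSpace ℝ (Fin m) → ℝ)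
    (g : EuclideanSpace ℝ (Fin k) → EuclideanSpace ℝ (Fin m))
    (hf : ∃ C > 0, ∀ x y, |f x - f y| ≤ C * (1 + ‖x‖ ^ p + ‖y‖ ^ p) * ‖x - y‖)
    (hg : ∀ i, ∃ C > 0, ∀ x y, |g x i - g y i| ≤ C * (1 + ‖x‖ ^ q + ‖y‖ ^ q) * ‖x - y‖) :
    ∃ r : ℝ, 0 ≤ r ∧ ∃ C > 0, ∀ x y,
      |f (g x) - f (g y)| ≤ C * (1 + ‖x‖ ^ r + ‖y‖ ^ r) * ‖x - y‖ := by
  obtain ⟨C, hC, hfC⟩ := hf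
  choose Cg hCgpos hCg using hg
  set D : ℝ := 1 + ∑ i, Cg i with hDdef
  have hsum : 0 ≤ ∑ i, Cg i := Finset.sum_nonneg fun i _ => (hCgpos i).le
  have hD1 : 1 ≤ D := by simp [hDdef]; linarith
  have hD0 : 0 < D := lt_of_lt_of_le one_pos hD1
  set E : ℝ := ‖g 0‖ with hEdef
  have hE0 : 0 ≤ E := norm_nonneg _
  -- difference bound on g
  have hgdiff : ∀ x y, ‖g x - g y‖ ≤ D * (1 + ‖x‖ ^ q + ‖y‖ ^ q) * ‖x - y‖ := by
    intro x y
    have h1 : ‖g x - g y‖ ≤ ∑ i, |g x i - g y i| := by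
      rw [EuclideanSpace.norm_eq]
      have h2 : ∑ i, ‖(g x - g y) i‖ ^ 2 ≤ (∑ i, |g x i - g y i|) ^ 2 := by
        have := Finset.sum_sq_le_sq_sum_of_nonneg
          (s := Finset.univ) (f := fun i => |g x i - g y i|)
          (fun i _ => abs_nonneg _)
        simpa [Real.norm_eq_abs] using this
      calc Real.sqrt (∑ i, ‖(g x - g y) i‖ ^ 2)
          ≤ Real.sqrt ((∑ i, |g x i - g y i|) ^ 2) := Real.sqrt_le_sqrt h2
        _ = ∑ i, |g x i - g y i| := by
            rw [Real.sqrt_sq (Finset.sum_nonneg fun i _ => abs_nonneg _)]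
    have h3 : ∑ i, |g x i - g y i| ≤
        (∑ i, Cg i) * ((1 + ‖x‖ ^ q + ‖y‖ ^ q) * ‖x - y‖) := by
      rw [Finset.sum_mul]
      refine Finset.sum_le_sum fun i _ => ?_
      have := hCg i x y
      linarith [this, mul_assoc (Cg i) (1 + ‖x‖ ^ q + ‖y‖ ^ q) ‖x - y‖]
    have hT : 0 ≤ (1 + ‖x‖ ^ q + ‖y‖ ^ q) * ‖x - y‖ := by positivity
    calc ‖g x - g y‖ ≤ (∑ i, Cg i) * ((1 + ‖x‖ ^ q + ‖y‖ ^ q) * ‖x - y‖) :=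
          h1.trans h3
      _ ≤ D * ((1 + ‖x‖ ^ q + ‖y‖ ^ q) * ‖x - y‖) := by
          apply mul_le_mul_of_nonneg_right _ hT; linarith
      _ = D * (1 + ‖x‖ ^ q + ‖y‖ ^ q) * ‖x - y‖ := by ring
  -- growth bound on g
  have hgrow : ∀ x, ‖g x‖ ≤ D * (2 + ‖x‖ ^ q) * ‖x‖ + E := by
    intro x
    have h1 : ‖g x‖ ≤ ‖g x - g 0‖ + ‖g 0‖ := by
      simpa using norm_sub_le (g x - g 0) (-(g 0)) |>.trans_eq (by simp) |>.trans_eq rfl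
    have h2 := hgdiff x 0
    have h0q : (0:ℝ) ^ q ≤ 1 := Real.rpow_le_one le_rfl zero_le_one hq
    have hx0 : ‖(0 : EuclideanSpace ℝ (Fin k))‖ = 0 := norm_zero
    rw [hx0] at h2
    simp only [sub_zero] at h2
    have : ‖g x - g 0‖ ≤ D * (2 + ‖x‖ ^ q) * ‖x‖ := by
      refine h2.trans ?_
      have : D * (1 + ‖x‖ ^ q + (0:ℝ) ^ q) ≤ D * (2 + ‖x‖ ^ q) := by nlinarith
      exact mul_le_mul_of_nonneg_right this (norm_nonneg _)
    have h1' : ‖g x‖ ≤ ‖g x - g 0‖ + E := by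
      have := norm_sub_norm_le (g x) (g 0)
      rw [hEdef]; linarith [abs_le.mp (abs_norm_sub_norm_le (g x) (g 0))]
    linarith
  set K : ℝ := 3 * D + E with hKdef
  have hK1 : 1 ≤ K := by linarith
  have hK0 : 0 < K := lt_of_lt_of_le one_pos hK1
  refine ⟨(q + 1) * p + q, by positivity, C * (1 + 2 * K ^ p) * (3 * D), by positivity,
    fun x y => ?_⟩
  set r : ℝ := (q + 1) * p + q with hrdef
  set a : ℝ := ‖x‖ with hadef
  set b : ℝ := ‖y‖ with hbdef
  set M : ℝ := max 1 (max a b) with hMdef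
  have hM1 : 1 ≤ M := le_max_left _ _
  have hM0 : 0 < M := lt_of_lt_of_le one_pos hM1
  have haM : a ≤ M := le_trans (le_max_left a b) (le_max_right _ _)
  have hbM : b ≤ M := le_trans (le_max_right a b) (le_max_right _ _)
  have ha0 : 0 ≤ a := norm_nonneg _
  have hb0 : 0 ≤ b := norm_nonneg _
  have rpow_le : ∀ (c : ℝ), 0 ≤ c → c ≤ M → ∀ (e : ℝ), 0 ≤ e → c ^ e ≤ M ^ e :=
    fun c hc hcM e he => Real.rpow_le_rpow hc hcM he
  have one_le_Mpow : ∀ (e : ℝ), 0 ≤ e → 1 ≤ M ^ e := fun e he => by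
    calc (1:ℝ) = M ^ (0:ℝ) := (Real.rpow_zero M).symm
      _ ≤ M ^ e := Real.rpow_le_rpow_of_exponent_le hM1 he
  -- bound on ‖g x - g y‖ in terms of M
  have hgd : ‖g x - g y‖ ≤ 3 * D * M ^ q * ‖x - y‖ := by
    refine (hgdiff x y).trans ?_
    have h1 : 1 + a ^ q + b ^ q ≤ 3 * M ^ q := by
      have := rpow_le a ha0 haM q hq
      have := rpow_le b hb0 hbM q hq
      have := one_le_Mpow q hq
      linarith
    have : D * (1 + a ^ q + b ^ q) ≤ D * (3 * M ^ q) :=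
      mul_le_mul_of_nonneg_left h1 hD0.le
    calc D * (1 + a ^ q + b ^ q) * ‖x - y‖ ≤ D * (3 * M ^ q) * ‖x - y‖ :=
          mul_le_mul_of_nonneg_right this (norm_nonneg _)
      _ = 3 * D * M ^ q * ‖x - y‖ := by ring
  -- growth bound in terms of M
  have hgrowM : ∀ z : EuclideanSpace ℝ (Fin k), ‖z‖ ≤ M → ‖g z‖ ≤ K * M ^ (q + 1) := by
    intro z hz
    have h1 := hgrow z
    have hzq : ‖z‖ ^ q ≤ M ^ q := rpow_le _ (norm_nonneg z) hz q hq
    have hMq1 : M ^ (q + 1) = M ^ q * M := Real.rpow_add_one hM0.ne' q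
    have h1M : 1 ≤ M ^ (q + 1) := one_le_Mpow _ (by linarith)
    have hMq0 : 0 < M ^ q := Real.rpow_pos_of_pos hM0 q
    have : D * (2 + ‖z‖ ^ q) * ‖z‖ ≤ 3 * D * (M ^ q * M) := by
      have h2 : 2 + ‖z‖ ^ q ≤ 3 * M ^ q := by
        have := one_le_Mpow q hq; linarith
      calc D * (2 + ‖z‖ ^ q) * ‖z‖ ≤ D * (3 * M ^ q) * M := by
            apply mul_le_mul (mul_le_mul_of_nonneg_left h2 hD0.le) hz (norm_nonneg _)
            positivity
        _ = 3 * D * (M ^ q * M) := by ring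
    calc ‖g z‖ ≤ D * (2 + ‖z‖ ^ q) * ‖z‖ + E := h1
      _ ≤ 3 * D * (M ^ q * M) + E * M ^ (q + 1) := by nlinarith
      _ = K * M ^ (q + 1) := by rw [hMq1, hKdef]; ring
  have hgxp : ∀ z : EuclideanSpace ℝ (Fin k), ‖z‖ ≤ M →
      ‖g z‖ ^ p ≤ K ^ p * M ^ ((q + 1) * p) := by
    intro z hz
    calc ‖g z‖ ^ p ≤ (K * M ^ (q + 1)) ^ p :=
          Real.rpow_le_rpow (norm_nonneg _) (hgrowM z hz) hp
      _ = K ^ p * (M ^ (q + 1)) ^ p :=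
          Real.mul_rpow hK0.le (Real.rpow_nonneg hM0.le _)
      _ = K ^ p * M ^ ((q + 1) * p) := by
          rw [← Real.rpow_mul hM0.le]
  -- M^r ≤ 1 + a^r + b^r
  have hr0 : 0 ≤ r := by rw [hrdef]; positivity
  have hMr : M ^ r ≤ 1 + a ^ r + b ^ r := by
    have har : 0 ≤ a ^ r := Real.rpow_nonneg ha0 r
    have hbr : 0 ≤ b ^ r := Real.rpow_nonneg hb0 r
    rcases max_cases 1 (max a b) with ⟨h1, _⟩ | ⟨h1, _⟩
    · rw [hMdef, h1, Real.one_rpow]; linarith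
    · rcases max_cases a b with ⟨h2, _⟩ | ⟨h2, _⟩
      · rw [hMdef, h1, h2]; linarith
      · rw [hMdef, h1, h2]; linarith
  -- main chain
  have hfp : 1 + ‖g x‖ ^ p + ‖g y‖ ^ p ≤ (1 + 2 * K ^ p) * M ^ ((q + 1) * p) := by
    have h1 := hgxp x haM
    have h2 := hgxp y hbM
    have h3 : 1 ≤ M ^ ((q + 1) * p) := one_le_Mpow _ (by positivity)
    have hKp : 0 ≤ K ^ p := Real.rpow_nonneg hK0.le p
    nlinarith
  have hMsq : M ^ ((q + 1) * p) * M ^ q = M ^ r := by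
    rw [hrdef, Real.rpow_add hM0]
  have hstep1 : |f (g x) - f (g y)| ≤
      C * (1 + ‖g x‖ ^ p + ‖g y‖ ^ p) * ‖g x - g y‖ := hfC (g x) (g y)
  have hnn1 : 0 ≤ 1 + ‖g x‖ ^ p + ‖g y‖ ^ p := by
    have := Real.rpow_nonneg (norm_nonneg (g x)) p
    have := Real.rpow_nonneg (norm_nonneg (g y)) p
    linarith
  have hnn2 : (0:ℝ) ≤ 3 * D * M ^ q * ‖x - y‖ := by
    have : (0:ℝ) ≤ M ^ q := (Real.rpow_pos_of_pos hM0 q).le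
    positivity
  calc |f (g x) - f (g y)|
      ≤ C * (1 + ‖g x‖ ^ p + ‖g y‖ ^ p) * ‖g x - g y‖ := hstep1
    _ ≤ C * ((1 + 2 * K ^ p) * M ^ ((q + 1) * p)) * (3 * D * M ^ q * ‖x - y‖) := by
        apply mul_le_mul (mul_le_mul_of_nonneg_left hfp hC.le) hgd (norm_nonneg _)
        have h5 : (0:ℝ) ≤ M ^ ((q + 1) * p) := (Real.rpow_pos_of_pos hM0 _).le
        have hKp : 0 ≤ K ^ p := Real.rpow_nonneg hK0.le p
        positivity
    _ = C * (1 + 2 * K ^ p) * (3 * D) * (M ^ ((q + 1) * p) * M ^ q) * ‖x - y‖ := by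
        ring
    _ = C * (1 + 2 * K ^ p) * (3 * D) * M ^ r * ‖x - y‖ := by rw [hMsq]
    _ ≤ C * (1 + 2 * K ^ p) * (3 * D) * (1 + a ^ r + b ^ r) * ‖x - y‖ := by
        apply mul_le_mul_of_nonneg_right _ (norm_nonneg _)
        apply mul_le_mul_of_nonneg_left hMr
        have hKp : 0 ≤ K ^ p := Real.rpow_nonneg hK0.le p
        positivity
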